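/- Let μ_1,...,μ_n and γ_1,...,γ_n be distinct complex numbers with μ_i ≠ γ_j for all i, j, let H: ℂ → ℂ be a function, and let ε_1,...,ε_n, η_1,...,η_n ∈ ℂ. Define the matrices δE, δA ∈ ℂ^{n×n} by δE_{ij} = -(H(μ_i)ε_i - H(γ_j)η_j)/(μ_i - γ_j) and δA_{ij} = -(μ_i H(μ_i)ε_i - γ_j H(γ_j)η_j)/(μ_i - γ_j). Then for any s ∈ ℂ, the matrix sδE - δA factors as sδE - δA = ε·F_E + F_A·η, where ε = diag(ε_1,...,ε_n), η = diag(η_1,...,η_n), (F_E)_{ij} = H(μ_i)(s - μ_i)/(γ_j - μ_i), and (F_A)_{ij} = H(γ_j)(γ_j - s)/(γ_j - μ_i). -/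

import Mathlib

open Matrix

theorem loewner_pencil_entry {K : Type*} [Field K] {μ γ : K} (h : μ ≠ γ) (s a b x y : K) :
    s * -((a * x - b * y) / (μ - γ)) - -((μ * a * x - γ * b * y) / (μ - γ)) =
      x * (a * (s - μ) / (γ - μ)) + b * (γ - s) / (γ - μ) * y := by
  have hμγ : μ - γ ≠ 0 := sub_ne_zero.mpr h
  have hγμ : γ - μ ≠ 0 := sub_ne_zero.mpr h.symm
  field_simp
  ring

/-- Noise-structure decomposition of the perturbed Loewner pencil:
`s δE - δA = diag(ε) ⬝ F_E + F_A ⬝ diag(η)`. -/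
theorem stmt4 (n : ℕ) (μ γ : Fin n → ℂ) (hdist : ∀ i j, μ i ≠ γ j)
    (H : ℂ → ℂ) (ε η : Fin n → ℂ) (s : ℂ)
    (δE δA FE FA : Matrix (Fin n) (Fin n) ℂ)
    (hδE : ∀ i j, δE i j = -((H (μ i) * ε i - H (γ j) * η j) / (μ i - γ j)))
    (hδA : ∀ i j, δA i j = -((μ i * H (μ i) * ε i - γ j * H (γ j) * η j) / (μ i - γ j)))
    (hFE : ∀ i j, FE i j = H (μ i) * (s - μ i) / (γ j - μ i))
    (hFA : ∀ i j, FA i j = H (γ j) * (γ j - s) / (γ j - μ i)) :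
    s • δE - δA = Matrix.diagonal ε * FE + FA * Matrix.diagonal η := by
  ext i j
  simp only [Matrix.sub_apply, Matrix.smul_apply, smul_eq_mul, Matrix.add_apply, diagonal_mul,
    mul_diagonal, hδE, hδA, hFE, hFA]
  exact loewner_pencil_entry (hdist i j) s (H (μ i)) (H (γ j)) (ε i) (η j)
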